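/- Solution of the homological equation with small divisors: Let D = diag(d_i) with (d_i)_{i∈ℤ^d} satisfying |d_i − d_j| ≥ γ |i−j|_∞^{−τ} for all i ≠ j (γ > 0, τ > 0). Let G be a matrix with zero main diagonal and ‖G‖_{s+τ} < ∞. Then the equation [D, W] + G = 0 (i.e., (d_i − d_j)W_{i,j} = −G_{i,j}) has a unique solution W with zero main diagonal, and ‖W‖_s ≤ γ^{−1} ‖G‖_{s+τ}. -/

import Mathlib

open scoped BigOperators

noncomputable section

abbrev Mat (d : ℕ) := (Fin d → ℤ) → (Fin d → ℤ) → ℝ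

/-- `|k|_∞` as a real number. -/
def absInf {d : ℕ} (k : Fin d → ℤ) : ℝ :=
  ((Finset.univ.sup fun v => (k v).natAbs : ℕ) : ℝ)

/-- `⟨k⟩ = max (1, |k|_∞)`. -/
def jp {d : ℕ} (k : Fin d → ℤ) : ℝ := max 1 (absInf k)

/-- sup-norm of the `k`-diagonal of a matrix. -/
def diagNorm {d : ℕ} (A : Mat d) (k : Fin d → ℤ) : ℝ := ⨆ i, |A i (i - k)|

/-- Sobolev norm `‖A‖_s`. -/
def SNorm {d : ℕ} (s : ℝ) (A : Mat d) : ℝ :=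
  Real.sqrt (∑' k : Fin d → ℤ, (diagNorm A k) ^ 2 * (jp k) ^ (2 * s))

/-- `A` has finite `‖·‖_s` norm. -/
def MemS {d : ℕ} (s : ℝ) (A : Mat d) : Prop :=
  (∀ k : Fin d → ℤ, BddAbove (Set.range fun i => |A i (i - k)|)) ∧
  Summable (fun k : Fin d → ℤ => (diagNorm A k) ^ 2 * (jp k) ^ (2 * s))

def K0 (d : ℕ) (α₀ : ℝ) : ℝ :=
  Real.sqrt (20 * ∑' k : Fin d → ℤ, (jp k) ^ (-(2 * α₀)))

def K1 (d : ℕ) (α₀ s : ℝ) : ℝ :=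
  (1 - (10:ℝ) ^ (-(1 / (2 * s)))) ^ (-s) *
    Real.sqrt (2 * ∑' k : Fin d → ℤ, (jp k) ^ (-(2 * α₀)))

def C0 (d : ℕ) (α₀ : ℝ) : ℝ := K0 d α₀ + K1 d α₀ α₀

def matMul {d : ℕ} (X Y : Mat d) : Mat d := fun i j => ∑' l : Fin d → ℤ, X i l * Y l j

def idMat {d : ℕ} : Mat d := fun i j => if i = j then 1 else 0

def powMat {d : ℕ} (X : Mat d) : ℕ → Mat d
  | 0 => idMat
  | n + 1 => matMul X (powMat X n)

def prodList {d : ℕ} (l : List (Mat d)) : Mat d := l.foldr matMul idMat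

lemma jp_pos {d : ℕ} (k : Fin d → ℤ) : 0 < jp k :=
  lt_of_lt_of_le one_pos (le_max_left _ _)

lemma diff_pos (s τ γ : ℝ) (hτ : 0 < τ) (hγ : 0 < γ) {d : ℕ} (k : Fin d → ℤ) :
    0 < γ * (jp k) ^ (-τ) :=
  mul_pos hγ (Real.rpow_pos_of_pos (jp_pos k) _)

theorem stmt12 (d : ℕ) (s τ γ : ℝ) (hs : 0 ≤ s) (hτ : 0 < τ) (hγ : 0 < γ)
    (dseq : (Fin d → ℤ) → ℝ)
    (hdist : ∀ i j : Fin d → ℤ, i ≠ j → γ * (jp (i - j)) ^ (-τ) ≤ |dseq i - dseq j|)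
    (G : Mat d) (hGdiag : ∀ i : Fin d → ℤ, G i i = 0) (hG : MemS (s + τ) G) :
    ∃! W : Mat d,
      (∀ i : Fin d → ℤ, W i i = 0) ∧
      (∀ i j : Fin d → ℤ, (dseq i - dseq j) * W i j = -G i j) ∧
      SNorm s W ≤ γ⁻¹ * SNorm (s + τ) G := by
  have hne : ∀ i j : Fin d → ℤ, i ≠ j → dseq i ≠ dseq j := by
    intro i j hij h
    have := hdist i j hij
    rw [h, sub_self, abs_zero] at this
    exact absurd this (not_le.mpr (diff_pos s τ γ hτ hγ _))
  set W : Mat d := fun i j => if i = j then 0 else -G i j / (dseq i - dseq j) with hWdef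
  have hWd : ∀ i, W i i = 0 := fun i => by simp [hWdef]
  have hWeq : ∀ i j, (dseq i - dseq j) * W i j = -G i j := by
    intro i j
    by_cases h : i = j
    · subst h; simp [hWdef, hGdiag]
    · have hd : dseq i - dseq j ≠ 0 := sub_ne_zero.mpr (hne i j h)
      simp only [hWdef, if_neg h]
      field_simp
  -- nonnegativity of diagNorms
  have hGnn : ∀ k, 0 ≤ diagNorm G k := fun k => Real.iSup_nonneg (fun i => abs_nonneg _)
  have hWnn : ∀ k, 0 ≤ diagNorm W k := fun k => Real.iSup_nonneg (fun i => abs_nonneg _)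
  -- key pointwise bound
  have key : ∀ k : Fin d → ℤ, diagNorm W k ≤ γ⁻¹ * (jp k) ^ τ * diagNorm G k := by
    intro k
    have hrhs : 0 ≤ γ⁻¹ * (jp k) ^ τ * diagNorm G k :=
      mul_nonneg (mul_nonneg (inv_nonneg.mpr hγ.le)
        (Real.rpow_nonneg (jp_pos k).le _)) (hGnn k)
    apply ciSup_le
    intro i
    by_cases hk : k = 0
    · subst hk
      simp only [sub_zero, hWd, abs_zero]
      exact hrhs
    · have hij : i ≠ i - k := by
        intro h
        apply hk
        have : i - (i - k) = 0 := by rw [← h]; simp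
        simpa [sub_sub_cancel] using this
      have hsub : i - (i - k) = k := sub_sub_cancel i k
      have hlb : γ * (jp k) ^ (-τ) ≤ |dseq i - dseq (i - k)| := by
        have := hdist i (i - k) hij
        rwa [hsub] at this
      have hdpos : 0 < |dseq i - dseq (i - k)| :=
        lt_of_lt_of_le (diff_pos s τ γ hτ hγ k) hlb
      have hWval : |W i (i - k)| = |G i (i - k)| / |dseq i - dseq (i - k)| := by
        simp only [hWdef, if_neg hij, abs_div, abs_neg]
      rw [hWval]
      have h1 : |G i (i - k)| / |dseq i - dseq (i - k)| ≤
          |G i (i - k)| / (γ * (jp k) ^ (-τ)) :=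
        div_le_div_of_nonneg_left (abs_nonneg _) (diff_pos s τ γ hτ hγ k) hlb
      have h2 : |G i (i - k)| / (γ * (jp k) ^ (-τ)) = γ⁻¹ * (jp k) ^ τ * |G i (i - k)| := by
        rw [Real.rpow_neg (jp_pos k).le]
        field_simp
      have h3 : |G i (i - k)| ≤ diagNorm G k := le_ciSup (hG.1 k) i
      calc |G i (i - k)| / |dseq i - dseq (i - k)|
          ≤ γ⁻¹ * (jp k) ^ τ * |G i (i - k)| := by rw [← h2]; exact h1
        _ ≤ γ⁻¹ * (jp k) ^ τ * diagNorm G k := by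
            apply mul_le_mul_of_nonneg_left h3
            exact mul_nonneg (inv_nonneg.mpr hγ.le) (Real.rpow_nonneg (jp_pos k).le _)
  -- squared bound
  have keysq : ∀ k : Fin d → ℤ,
      (diagNorm W k) ^ 2 * (jp k) ^ (2 * s) ≤
      γ⁻¹ ^ 2 * ((diagNorm G k) ^ 2 * (jp k) ^ (2 * (s + τ))) := by
    intro k
    have h1 : (diagNorm W k) ^ 2 ≤ (γ⁻¹ * (jp k) ^ τ * diagNorm G k) ^ 2 :=
      pow_le_pow_left₀ (hWnn k) (key k) 2
    have hjs : (0:ℝ) ≤ (jp k) ^ (2 * s) := Real.rpow_nonneg (jp_pos k).le _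
    have h2 : (diagNorm W k) ^ 2 * (jp k) ^ (2 * s) ≤
        (γ⁻¹ * (jp k) ^ τ * diagNorm G k) ^ 2 * (jp k) ^ (2 * s) :=
      mul_le_mul_of_nonneg_right h1 hjs
    refine h2.trans_eq ?_
    have hrw : ((jp k) ^ τ) ^ 2 * (jp k) ^ (2 * s) = (jp k) ^ (2 * (s + τ)) := by
      rw [← Real.rpow_natCast ((jp k) ^ τ) 2, ← Real.rpow_mul (jp_pos k).le,
        ← Real.rpow_add (jp_pos k)]
      norm_num
      ring_nf
    calc (γ⁻¹ * (jp k) ^ τ * diagNorm G k) ^ 2 * (jp k) ^ (2 * s)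
        = γ⁻¹ ^ 2 * ((diagNorm G k) ^ 2 * (((jp k) ^ τ) ^ 2 * (jp k) ^ (2 * s))) := by ring
      _ = γ⁻¹ ^ 2 * ((diagNorm G k) ^ 2 * (jp k) ^ (2 * (s + τ))) := by rw [hrw]
  have hsumG : Summable (fun k : Fin d → ℤ =>
      γ⁻¹ ^ 2 * ((diagNorm G k) ^ 2 * (jp k) ^ (2 * (s + τ)))) := hG.2.mul_left _
  have hsumW : Summable (fun k : Fin d → ℤ => (diagNorm W k) ^ 2 * (jp k) ^ (2 * s)) := by
    apply Summable.of_nonneg_of_le _ keysq hsumG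
    intro k
    exact mul_nonneg (sq_nonneg _) (Real.rpow_nonneg (jp_pos k).le _)
  have htsum : (∑' k : Fin d → ℤ, (diagNorm W k) ^ 2 * (jp k) ^ (2 * s)) ≤
      γ⁻¹ ^ 2 * ∑' k : Fin d → ℤ, (diagNorm G k) ^ 2 * (jp k) ^ (2 * (s + τ)) := by
    rw [← tsum_mul_left]
    exact Summable.tsum_le_tsum keysq hsumW hsumG
  have hnorm : SNorm s W ≤ γ⁻¹ * SNorm (s + τ) G := by
    unfold SNorm
    calc Real.sqrt (∑' k : Fin d → ℤ, (diagNorm W k) ^ 2 * (jp k) ^ (2 * s))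
        ≤ Real.sqrt (γ⁻¹ ^ 2 * ∑' k : Fin d → ℤ,
            (diagNorm G k) ^ 2 * (jp k) ^ (2 * (s + τ))) := Real.sqrt_le_sqrt htsum
      _ = γ⁻¹ * Real.sqrt (∑' k : Fin d → ℤ,
            (diagNorm G k) ^ 2 * (jp k) ^ (2 * (s + τ))) := by
          rw [Real.sqrt_mul (sq_nonneg _), Real.sqrt_sq (inv_nonneg.mpr hγ.le)]
  refine ⟨W, ⟨hWd, hWeq, hnorm⟩, ?_⟩
  rintro W' ⟨hW'd, hW'eq, -⟩
  funext i j
  by_cases h : i = j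
  · subst h; rw [hW'd, hWd]
  · have hd : dseq i - dseq j ≠ 0 := sub_ne_zero.mpr (hne i j h)
    have e1 := hW'eq i j
    have e2 := hWeq i j
    have : (dseq i - dseq j) * W' i j = (dseq i - dseq j) * W i j := by rw [e1, e2]
    exact mul_left_cancel₀ hd this
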